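/- arXiv:2410.12494 — 3 statements merged into one kernel-verified Lean document; each statement's English description precedes it below -/
import Mathlib

section
/- For a finite poset P, a point i ∈ P, and a finite poset Q, fix a linear extension g of Q and let R_g be the set of linear extensions f of P ∘_i Q such that the linear order induced by f on Q equals g. Then there is a bijection between the set of all linear extensions of P ∘_i Q and the product R_g × L(Q), where L(Q) is the set of linear extensions of Q. -/
open scoped Lex

/-- A finite poset is a chain if any two elements are comparable. -/
def IsChainPoset (R : Type*) [PartialOrder R] : Prop := ∀ x y : R, x ≤ y ∨ y ≤ x

/-- Linear extensions of a finite poset `R`: order-preserving bijective labelings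
by `{1, …, |R|}` (here modeled by `Fin (card R)`). -/
def LinExt (R : Type*) [PartialOrder R] [Fintype R] :=
  {f : R ≃ Fin (Fintype.card R) // ∀ x y : R, x < y → f x < f y}

/-- `e(R)`: the number of linear extensions of `R`. -/
noncomputable def numExt (R : Type*) [PartialOrder R] [Fintype R] : ℕ := Nat.card (LinExt R)

/-- The number of linear extensions of `R` placing `x` below `y`. -/
noncomputable def numBelow (R : Type*) [PartialOrder R] [Fintype R] (x y : R) : ℕ :=
  Nat.card {f : LinExt R // f.1 x < f.1 y}

/-- The number of linear extensions of `R` placing `a` below `b` and `c` below `d`. -/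
noncomputable def numBelow2 (R : Type*) [PartialOrder R] [Fintype R] (a b c d : R) : ℕ :=
  Nat.card {f : LinExt R // f.1 a < f.1 b ∧ f.1 c < f.1 d}

/-- `ℙ_R(x < y)`: the fraction of linear extensions of `R` placing `x` below `y`. -/
noncomputable def probBelow (R : Type*) [PartialOrder R] [Fintype R] (x y : R) : ℚ :=
  (numBelow R x y : ℚ) / (numExt R : ℚ)

/-- `δ(R) = max_{x ≠ y} min {ℙ_R(x<y), ℙ_R(y<x)}` (and `0` for chains / small posets). -/
noncomputable def delta (R : Type*) [PartialOrder R] [Fintype R] [DecidableEq R] : ℚ :=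
  Finset.univ.fold max 0 (fun xy : R × R =>
    if xy.1 = xy.2 then 0 else min (probBelow R xy.1 xy.2) (probBelow R xy.2 xy.1))

/-- The lexicographic sum `P ∘_i Q`: the poset obtained from `P` by replacing the
point `i` by the poset `Q`, elements of `Q` inheriting all comparabilities of `i`. -/
def LexAt (P : Type*) (i : P) (Q : Type*) := {p : P // p ≠ i} ⊕ Q

instance LexAt.instPartialOrder (P : Type*) [PartialOrder P] (i : P) (Q : Type*)
    [PartialOrder Q] : PartialOrder (LexAt P i Q) where
  le x y :=
    match x, y with
    | .inl a, .inl b => a.1 ≤ b.1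
    | .inl a, .inr _ => a.1 < i
    | .inr _, .inl b => i < b.1
    | .inr q, .inr q' => q ≤ q'
  le_refl x := by cases x <;> exact le_refl _
  le_trans x y z hxy hyz := by
    cases x <;> cases y <;> cases z <;>
    first
      | exact hxy
      | exact hyz
      | exact le_trans hxy hyz
      | exact lt_of_le_of_lt hxy hyz
      | exact lt_of_lt_of_le hxy hyz
      | exact le_of_lt (lt_trans hxy hyz)
      | exact absurd (lt_trans hxy hyz) (lt_irrefl i)
  le_antisymm x y hxy hyx := by
    cases x <;> cases y <;>
    first
      | exact congrArg Sum.inl (Subtype.ext (le_antisymm hxy hyx))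
      | exact congrArg Sum.inr (le_antisymm hxy hyx)
      | exact absurd (lt_trans hxy hyx) (lt_irrefl i)
      | exact absurd (lt_trans hyx hxy) (lt_irrefl i)

instance LexAt.instFintype (P : Type*) [Fintype P] [DecidableEq P] (i : P) (Q : Type*)
    [Fintype Q] : Fintype (LexAt P i Q) := inferInstanceAs (Fintype ({p : P // p ≠ i} ⊕ Q))

instance LexAt.instDecidableEq (P : Type*) [DecidableEq P] (i : P) (Q : Type*)
    [DecidableEq Q] : DecidableEq (LexAt P i Q) :=
  inferInstanceAs (DecidableEq ({p : P // p ≠ i} ⊕ Q))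


open Function

/-!
A linear extension `f` of `P ∘_i Q` is determined by the linear extension `f|_Q` of `Q` it
induces and by the extension obtained from `f` by permuting the positions of the `Q`-block so
that it induces `g` instead: all points of `Q` are comparable to the points of `P` in the same
way, so such a permutation maps linear extensions to linear extensions.
-/

section Rank

variable {α β : Type*} [Fintype α] [LinearOrder β]

noncomputable def rankEquiv (φ : α → β) (hφ : Injective φ) : α ≃ Fin (Fintype.card α) :=
  (Equiv.ofInjective φ hφ).trans
    (Fintype.orderIsoFinOfCardEq (Set.range φ) (Set.card_range_of_injective hφ)).symm.toEquiv

theorem rankEquiv_lt_rankEquiv_iff (φ : α → β) (hφ : Injective φ) (a b : α) :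
    rankEquiv φ hφ a < rankEquiv φ hφ b ↔ φ a < φ b := by
  simp [rankEquiv, ← Subtype.coe_lt_coe]

end Rank

theorem Equiv.eq_of_lt_iff_lt {α : Type*} {n : ℕ} {e₁ e₂ : α ≃ Fin n}
    (h : ∀ a b, e₁ a < e₁ b ↔ e₂ a < e₂ b) : e₁ = e₂ := by
  let o : Fin n ≃o Fin n :=
    { e₁.symm.trans e₂ with
      map_rel_iff' := fun {x y} => by
        simpa using (not_congr (h (e₁.symm y) (e₁.symm x))).symm }
  ext a
  simpa [o] using congrArg (fun f => (f (e₁ a) : ℕ)) (Subsingleton.elim (OrderIso.refl _) o)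

theorem LinExt.ext {R : Type*} [PartialOrder R] [Fintype R] {f f' : LinExt R}
    (h : ∀ x, f.1 x = f'.1 x) : f = f' :=
  Subtype.ext (Equiv.ext h)

namespace LexAt

variable {P Q : Type*} [PartialOrder P] [PartialOrder Q] {i : P}

@[simp] theorem inl_lt_inr_iff {a : {p : P // p ≠ i}} {q : Q} :
    @LT.lt (LexAt P i Q) _ (Sum.inl a) (Sum.inr q) ↔ (a : P) < i :=
  lt_iff_le_not_ge.trans <|
    and_iff_left_of_imp fun (h : (a : P) < i) (h' : i < a) => lt_asymm h h'

@[simp] theorem inr_lt_inl_iff {a : {p : P // p ≠ i}} {q : Q} :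
    @LT.lt (LexAt P i Q) _ (Sum.inr q) (Sum.inl a) ↔ i < a :=
  lt_iff_le_not_ge.trans <|
    and_iff_left_of_imp fun (h : i < (a : P)) (h' : (a : P) < i) => lt_asymm h h'

@[simp] theorem inr_lt_inr_iff {q q' : Q} :
    @LT.lt (LexAt P i Q) _ (Sum.inr q) (Sum.inr q') ↔ q < q' :=
  lt_iff_le_not_ge.trans (lt_iff_le_not_ge (a := q) (b := q')).symm

variable [Fintype P] [DecidableEq P] [Fintype Q]

def relabel (f : LinExt (LexAt P i Q)) (σ : Q ≃ Q)
    (hσ : ∀ q₁ q₂ : Q, q₁ < q₂ → f.1 (Sum.inr (σ q₁)) < f.1 (Sum.inr (σ q₂))) :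
    LinExt (LexAt P i Q) :=
  ⟨(Equiv.sumCongr (Equiv.refl _) σ).trans f.1, by
    rintro (a | q) (b | q') h
    · exact f.2 _ _ h
    · exact f.2 (Sum.inl a) (Sum.inr (σ q')) (inl_lt_inr_iff.2 (inl_lt_inr_iff.1 h))
    · exact f.2 (Sum.inr (σ q)) (Sum.inl b) (inr_lt_inl_iff.2 (inr_lt_inl_iff.1 h))
    · exact hσ q q' (inr_lt_inr_iff.1 h)⟩

@[simp] theorem relabel_inl (f : LinExt (LexAt P i Q)) (σ : Q ≃ Q) (hσ)
    (a : {p : P // p ≠ i}) :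
    (relabel f σ hσ).1 (Sum.inl a) = f.1 (Sum.inl a) := rfl

@[simp] theorem relabel_inr (f : LinExt (LexAt P i Q)) (σ : Q ≃ Q) (hσ) (q : Q) :
    (relabel f σ hσ).1 (Sum.inr q) = f.1 (Sum.inr (σ q)) := rfl

noncomputable def restrict (f : LinExt (LexAt P i Q)) : LinExt Q :=
  ⟨rankEquiv (fun q => f.1 (Sum.inr q)) (f.1.injective.comp Sum.inr_injective),
    fun q q' h => (rankEquiv_lt_rankEquiv_iff _ _ q q').2 (f.2 _ _ (inr_lt_inr_iff.2 h))⟩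

theorem restrict_lt_restrict_iff (f : LinExt (LexAt P i Q)) (q q' : Q) :
    (restrict f).1 q < (restrict f).1 q' ↔ f.1 (Sum.inr q) < f.1 (Sum.inr q') :=
  rankEquiv_lt_rankEquiv_iff _ _ q q'

theorem restrict_eq_of_lt_iff {f : LinExt (LexAt P i Q)} {h : LinExt Q}
    (hf : ∀ q q', f.1 (Sum.inr q) < f.1 (Sum.inr q') ↔ h.1 q < h.1 q') : restrict f = h :=
  Subtype.ext <| Equiv.eq_of_lt_iff_lt fun q q' =>
    (restrict_lt_restrict_iff f q q').trans (hf q q')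

end LexAt

/-- fixing a linear extension `g` of `Q`, the set of linear extensions of
`P ∘_i Q` is in bijection with `R_g × L(Q)`, where `R_g` is the set of linear extensions
of `P ∘_i Q` whose induced linear order on `Q` is `g`. -/
theorem linExt_lexAt_equiv_prod (P Q : Type) [PartialOrder P] [Fintype P] [DecidableEq P]
    [PartialOrder Q] [Fintype Q] (i : P) (g : LinExt Q) :
    Nonempty (LinExt (LexAt P i Q) ≃
      {f : LinExt (LexAt P i Q) //
        ∀ q₁ q₂ : Q, f.1 (Sum.inr q₁) < f.1 (Sum.inr q₂) ↔ g.1 q₁ < g.1 q₂} × LinExt Q) := by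
  refine ⟨{
    toFun := fun f =>
      (⟨LexAt.relabel f (g.1.trans (LexAt.restrict f).1.symm) fun q₁ q₂ h => by
          simpa [← LexAt.restrict_lt_restrict_iff] using g.2 _ _ h,
        fun q₁ q₂ => by simp [← LexAt.restrict_lt_restrict_iff]⟩, LexAt.restrict f)
    invFun := fun fh =>
      LexAt.relabel fh.1.1 (fh.2.1.trans g.1.symm) fun q₁ q₂ h => by
        simpa [fh.1.2] using fh.2.2 _ _ h
    left_inv := fun f => LinExt.ext <| by rintro (a | q) <;> simp
    right_inv := ?_ }⟩
  rintro ⟨⟨f, hf⟩, h⟩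
  have hres : ∀ hσ, LexAt.restrict (LexAt.relabel f (h.1.trans g.1.symm) hσ) = h := fun _ =>
    LexAt.restrict_eq_of_lt_iff fun q q' => by simp [hf]
  refine Prod.ext (Subtype.ext <| LinExt.ext ?_) (hres _)
  rintro (a | q) <;> simp [hres]
end

section
/- Let P be a finite poset with n elements and Q₁,…,Qₙ finite posets. Then δ(P(Q₁,…,Qₙ)) ≥ max over 1 ≤ i ≤ n of δ(Qᵢ), where δ(R) = max over pairs x,y ∈ R of min{ℙ_R(x<y), ℙ_R(y<x)}. -/
open scoped Lex

instance sigmaLex.instFintype (ι : Type*) [Fintype ι] [DecidableEq ι] (Q : ι → Type*)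
    [∀ i, Fintype (Q i)] : Fintype (Σₗ i, Q i) := inferInstanceAs (Fintype (Σ i, Q i))

instance sigmaLex.instDecidableEq (ι : Type*) [DecidableEq ι] (Q : ι → Type*)
    [∀ i, DecidableEq (Q i)] : DecidableEq (Σₗ i, Q i) :=
  inferInstanceAs (DecidableEq (Σ i, Q i))

/-! Fix `j` and `x, y ∈ Q j`. A linear extension `f` of the lexicographic sum ranks the fibre
`Q j` and so restricts to a linear extension of `Q j`; conversely, since every element outside
the fibre compares with all of `Q j` in the same way, the labels `f` gives to `Q j` can be
redistributed along any linear extension `g` of `Q j`. The map `(f, g) ↦ (f|Q j, f relabelled by g)`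
is a bijection `LinExt (Σₗ p, Q p) × LinExt (Q j) ≃ LinExt (Q j) × LinExt (Σₗ p, Q p)` that turns
"`f` puts `x` below `y`" into "the restriction puts `x` below `y`". Hence `ℙ(x < y)` is the same in
`Q j` and in the sum, and `δ` can only grow. -/

theorem equiv_fin_ext_of_lt_iff {α : Type*} {m : ℕ} {e₁ e₂ : α ≃ Fin m}
    (h : ∀ a b, e₁ a < e₁ b ↔ e₂ a < e₂ b) : e₁ = e₂ := by
  have hmono : StrictMono (e₂.symm.trans e₁) := fun a b hab => by simpa [h] using hab
  have hid : hmono.orderIsoOfSurjective _ (e₂.symm.trans e₁).surjective = OrderIso.refl _ :=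
    Subsingleton.elim _ _
  ext a
  simpa using congrArg (fun φ : Fin m ≃o Fin m => (φ (e₂ a) : ℕ)) hid

namespace LinExt

variable {R : Type*} [PartialOrder R] [Fintype R]

instance : Finite (LinExt R) :=
  inferInstanceAs (Finite {f : R ≃ Fin (Fintype.card R) // ∀ x y : R, x < y → f x < f y})

instance : Nonempty (LinExt R) := by
  let : Fintype (LinearExtension R) := ‹Fintype R›
  let e := Fintype.orderIsoFinOfCardEq (LinearExtension R) (rfl : _ = Fintype.card R)
  have hmono : StrictMono (toLinearExtension : R → LinearExtension R) :=
    toLinearExtension.monotone.strictMono_of_injective fun _ _ h => h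
  exact ⟨⟨(Equiv.refl R).trans e.symm.toEquiv, fun x y h => e.symm.strictMono (hmono h)⟩⟩

end LinExt

theorem numExt_pos (R : Type*) [PartialOrder R] [Fintype R] : 0 < numExt R :=
  Nat.card_pos

section Delta

variable {R : Type*} [PartialOrder R] [Fintype R] [DecidableEq R]

theorem delta_nonneg : 0 ≤ delta R :=
  (Finset.le_fold_max _).2 (Or.inl le_rfl)

theorem min_probBelow_le_delta {x y : R} (hxy : x ≠ y) :
    min (probBelow R x y) (probBelow R y x) ≤ delta R :=
  (Finset.le_fold_max _).2 (Or.inr ⟨(x, y), Finset.mem_univ _, (if_neg hxy).ge⟩)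

theorem delta_le_delta_of_injective {S : Type*} [PartialOrder S] [Fintype S] [DecidableEq S]
    {e : R → S} (he : Function.Injective e)
    (h : ∀ x y, probBelow S (e x) (e y) = probBelow R x y) : delta R ≤ delta S := by
  refine (Finset.fold_max_le _).2 ⟨delta_nonneg, fun ⟨x, y⟩ _ => ?_⟩
  dsimp only
  split_ifs with hxy
  · exact delta_nonneg
  · rw [← h x y, ← h y x]
    exact min_probBelow_le_delta (he.ne hxy)

end Delta

theorem Nat.card_subtype_prod_fst {α β : Type*} (p : α → Prop) :
    Nat.card {s : α × β // p s.1} = Nat.card {a // p a} * Nat.card β :=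
  (Nat.card_congr Equiv.prodSubtypeFstEquivSubtypeProd).trans (Nat.card_prod _ _)

section LexSum

variable {P : Type*} {Q : P → Type*} (j : P)

theorem toLex_mk_injective : Function.Injective (fun q : Q j => (toLex ⟨j, q⟩ : Σₗ p, Q p)) :=
  fun _ _ h => eq_of_heq (Sigma.mk.inj (toLex.injective h)).2

variable [PartialOrder P] [∀ p, PartialOrder (Q p)]

theorem toLex_mk_lt_toLex_mk_iff {a b : Q j} :
    (toLex ⟨j, a⟩ : Σₗ p, Q p) < toLex ⟨j, b⟩ ↔ a < b := by
  rw [Sigma.Lex.lt_def]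
  constructor
  · rintro (h | ⟨_, h⟩)
    · exact absurd h (lt_irrefl j)
    · exact h
  · exact fun h => Or.inr ⟨rfl, h⟩

variable [Fintype P] [DecidableEq P] [∀ p, Fintype (Q p)]

namespace LinExt

variable (f : LinExt (Σₗ p, Q p))

theorem fiber_injective : Function.Injective (fun q : Q j => f.1 (toLex ⟨j, q⟩)) :=
  f.1.injective.comp (toLex_mk_injective j)

noncomputable def fiberRank : Q j ≃ Fin (Fintype.card (Q j)) :=
  (Equiv.ofInjective _ (fiber_injective j f)).trans
    (Fintype.orderIsoFinOfCardEq _ (Set.card_range_of_injective (fiber_injective j f))).symm.toEquiv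

theorem fiberRank_lt_fiberRank_iff {a b : Q j} :
    fiberRank j f a < fiberRank j f b ↔ f.1 (toLex ⟨j, a⟩) < f.1 (toLex ⟨j, b⟩) := by
  simp only [fiberRank, Equiv.trans_apply, Equiv.ofInjective_apply, OrderIso.toEquiv_symm,
    OrderIso.coe_symm_toEquiv, OrderIso.lt_iff_lt]
  exact Subtype.mk_lt_mk

noncomputable def restrict : LinExt (Q j) :=
  ⟨fiberRank j f, fun _ _ h =>
    (fiberRank_lt_fiberRank_iff j f).2 (f.2 _ _ ((toLex_mk_lt_toLex_mk_iff j).2 h))⟩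

variable (g : LinExt (Q j))

noncomputable def replaceFiberPerm : ∀ p, Q p ≃ Q p :=
  Function.update (fun p => Equiv.refl (Q p)) j (g.1.trans (fiberRank j f).symm)

noncomputable def replaceFiberEquiv : (Σₗ p, Q p) ≃ Fin (Fintype.card (Σₗ p, Q p)) :=
  (ofLex.trans ((Equiv.sigmaCongrRight (replaceFiberPerm j f g)).trans toLex)).trans f.1

theorem replaceFiberEquiv_apply (p : P) (a : Q p) :
    replaceFiberEquiv j f g (toLex ⟨p, a⟩) = f.1 (toLex ⟨p, replaceFiberPerm j f g p a⟩) :=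
  rfl

theorem replaceFiberPerm_self (q : Q j) :
    replaceFiberPerm j f g j q = (fiberRank j f).symm (g.1 q) := by
  simp [replaceFiberPerm]

theorem replaceFiberPerm_of_ne {p : P} (hp : p ≠ j) (a : Q p) : replaceFiberPerm j f g p a = a := by
  simp [replaceFiberPerm, hp]

theorem replaceFiberEquiv_strictMono (s t : Σₗ p, Q p) (hst : s < t) :
    replaceFiberEquiv j f g s < replaceFiberEquiv j f g t := by
  obtain ⟨p, a⟩ := s
  obtain ⟨p', b⟩ := t
  rcases hst with ⟨_, _, hp⟩ | ⟨a, b, hab⟩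
  · exact f.2 _ _ (Sigma.Lex.left _ _ hp)
  · rw [show (⟨p, a⟩ : Σₗ p, Q p) = toLex ⟨p, a⟩ from rfl,
      show (⟨p, b⟩ : Σₗ p, Q p) = toLex ⟨p, b⟩ from rfl,
      replaceFiberEquiv_apply, replaceFiberEquiv_apply]
    by_cases hp : p = j
    · subst hp
      rw [replaceFiberPerm_self, replaceFiberPerm_self, ← fiberRank_lt_fiberRank_iff]
      simpa using g.2 _ _ hab
    · rw [replaceFiberPerm_of_ne j f g hp, replaceFiberPerm_of_ne j f g hp]
      exact f.2 _ _ ((toLex_mk_lt_toLex_mk_iff p).2 hab)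

noncomputable def replaceFiber : LinExt (Σₗ p, Q p) :=
  ⟨replaceFiberEquiv j f g, replaceFiberEquiv_strictMono j f g⟩

theorem replaceFiber_apply_self (q : Q j) :
    (replaceFiber j f g).1 (toLex ⟨j, q⟩) = f.1 (toLex ⟨j, (fiberRank j f).symm (g.1 q)⟩) := by
  rw [replaceFiber, replaceFiberEquiv_apply, replaceFiberPerm_self]

theorem replaceFiber_apply_of_ne {p : P} (hp : p ≠ j) (a : Q p) :
    (replaceFiber j f g).1 (toLex ⟨p, a⟩) = f.1 (toLex ⟨p, a⟩) := by
  rw [replaceFiber, replaceFiberEquiv_apply, replaceFiberPerm_of_ne j f g hp]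

theorem fiberRank_replaceFiber : fiberRank j (replaceFiber j f g) = g.1 :=
  equiv_fin_ext_of_lt_iff fun a b => by
    rw [fiberRank_lt_fiberRank_iff, replaceFiber_apply_self, replaceFiber_apply_self,
      ← fiberRank_lt_fiberRank_iff]
    simp

theorem restrict_replaceFiber : restrict j (replaceFiber j f g) = g :=
  Subtype.ext (fiberRank_replaceFiber j f g)

theorem replaceFiber_replaceFiber_restrict :
    replaceFiber j (replaceFiber j f g) (restrict j f) = f := by
  refine Subtype.ext (Equiv.ext fun ⟨p, a⟩ => ?_)
  change (replaceFiber j _ _).1 (toLex ⟨p, a⟩) = f.1 (toLex ⟨p, a⟩)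
  by_cases hp : p = j
  · subst hp
    rw [replaceFiber_apply_self, fiberRank_replaceFiber, replaceFiber_apply_self]
    simp [restrict]
  · rw [replaceFiber_apply_of_ne j _ _ hp, replaceFiber_apply_of_ne j _ _ hp]

noncomputable def restrictReplaceEquiv :
    LinExt (Σₗ p, Q p) × LinExt (Q j) ≃ LinExt (Q j) × LinExt (Σₗ p, Q p) where
  toFun fg := (restrict j fg.1, replaceFiber j fg.1 fg.2)
  invFun gf := (replaceFiber j gf.2 gf.1, restrict j gf.2)
  left_inv _ := Prod.ext (replaceFiber_replaceFiber_restrict j _ _) (restrict_replaceFiber j _ _)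
  right_inv _ := Prod.ext (restrict_replaceFiber j _ _) (replaceFiber_replaceFiber_restrict j _ _)

end LinExt

theorem numBelow_lexSum_mul_numExt (x y : Q j) :
    numBelow (Σₗ p, Q p) (toLex ⟨j, x⟩) (toLex ⟨j, y⟩) * numExt (Q j) =
      numBelow (Q j) x y * numExt (Σₗ p, Q p) := by
  rw [numBelow, numBelow, numExt, numExt, ← Nat.card_subtype_prod_fst,
    ← Nat.card_subtype_prod_fst]
  exact Nat.card_congr <| (LinExt.restrictReplaceEquiv j).subtypeEquiv
    fun fg => (LinExt.fiberRank_lt_fiberRank_iff j fg.1).symm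

theorem probBelow_lexSum_toLex_mk (x y : Q j) :
    probBelow (Σₗ p, Q p) (toLex ⟨j, x⟩) (toLex ⟨j, y⟩) = probBelow (Q j) x y := by
  have hS : (numExt (Σₗ p, Q p) : ℚ) ≠ 0 := by exact_mod_cast (numExt_pos _).ne'
  have hQ : (numExt (Q j) : ℚ) ≠ 0 := by exact_mod_cast (numExt_pos _).ne'
  rw [probBelow, probBelow, div_eq_div_iff hS hQ]
  exact_mod_cast numBelow_lexSum_mul_numExt j x y

end LexSum

/-- `δ(P(Q₁,…,Qₙ)) ≥ max_i δ(Qᵢ)`, i.e. `δ(Qⱼ) ≤ δ` of the lexicographic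
sum for every `j`. -/
theorem delta_lexSum_ge (P : Type) [PartialOrder P] [Fintype P] [DecidableEq P]
    (Q : P → Type) [∀ p, PartialOrder (Q p)] [∀ p, Fintype (Q p)] [∀ p, DecidableEq (Q p)]
    (j : P) :
    delta (Q j) ≤ delta (Σₗ p, Q p) :=
  delta_le_delta_of_injective (toLex_mk_injective j) (probBelow_lexSum_toLex_mk j)
end

section
/- Let P be the 6-element poset whose Hasse diagram corresponds to the permutation-encoded poset with relations making δ(P) = 7/15, and let P′ be the 5-element subposet obtained by removing an appropriate point, with δ(P′) = 1/2. Then δ(P) < δ(P′); in particular, δ of a lexicographic sum can be strictly smaller than δ of the outer poset P, i.e., the inequality δ(P(Q₁,…,Qₙ)) ≥ δ(P) fails in general. -/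
open scoped Lex

/-- The 5-element poset `P′` (pcauset {1,5,3,2,4}): `0` below everything, `1` above only
`0`, `2 < 4`, `3 < 4`. It satisfies `δ(P′) = 1/2`. -/
def P5 := Fin 5

instance : DecidableEq P5 := inferInstanceAs (DecidableEq (Fin 5))
instance : Fintype P5 := inferInstanceAs (Fintype (Fin 5))

def p5LE (a b : P5) : Prop := a = b ∨ (a = (0 : Fin 5) ∧ b ≠ (0 : Fin 5)) ∨
    (a = (2 : Fin 5) ∧ b = (4 : Fin 5)) ∨ (a = (3 : Fin 5) ∧ b = (4 : Fin 5))

instance : DecidableRel p5LE := fun a b => by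
  haveI : ∀ (x : P5) (y : Fin 5), Decidable (x = y) := fun x y => decEq x y
  unfold p5LE; infer_instance

theorem p5LE_refl : ∀ a : P5, p5LE a a := by decide
theorem p5LE_trans : ∀ a b c : P5, p5LE a b → p5LE b c → p5LE a c := by decide
theorem p5LE_antisymm : ∀ a b : P5, p5LE a b → p5LE b a → a = b := by decide

instance : PartialOrder P5 where
  le := p5LE
  le_refl := p5LE_refl
  le_trans := p5LE_trans
  le_antisymm := p5LE_antisymm

/-- The 6-element poset `P` (pcauset {1,6,3,4,2,5}), obtained from `P5` by replacing the
point `2` by the 2-chain: `0` below everything, `1` above only `0`, `2 < 3 < 5`,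
`2 < 5`, `4 < 5`. It satisfies `δ(P) = 7/15`. -/
def P6 := Fin 6

instance : DecidableEq P6 := inferInstanceAs (DecidableEq (Fin 6))
instance : Fintype P6 := inferInstanceAs (Fintype (Fin 6))

def p6LE (a b : P6) : Prop := a = b ∨ (a = (0 : Fin 6) ∧ b ≠ (0 : Fin 6)) ∨
    (a = (2 : Fin 6) ∧ b = (3 : Fin 6)) ∨ (a = (2 : Fin 6) ∧ b = (5 : Fin 6)) ∨
    (a = (3 : Fin 6) ∧ b = (5 : Fin 6)) ∨ (a = (4 : Fin 6) ∧ b = (5 : Fin 6))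

instance : DecidableRel p6LE := fun a b => by
  haveI : ∀ (x : P6) (y : Fin 6), Decidable (x = y) := fun x y => decEq x y
  unfold p6LE; infer_instance

theorem p6LE_refl : ∀ a : P6, p6LE a a := by decide
theorem p6LE_trans : ∀ a b c : P6, p6LE a b → p6LE b c → p6LE a c := by decide
theorem p6LE_antisymm : ∀ a b : P6, p6LE a b → p6LE b a → a = b := by decide

instance : PartialOrder P6 where
  le := p6LE
  le_refl := p6LE_refl
  le_trans := p6LE_trans
  le_antisymm := p6LE_antisymm
/-!
All counts are computed by exhaustive enumeration. A linear extension is the same thing as a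
duplicate-free listing of all elements in which `x < y` always puts `x` before `y`, so the linear
extensions of a poset whose elements are enumerated by a list `base` are the order-respecting
permutations of `base`, and every quantity entering `δ` is the length of a filtered list that the
kernel can evaluate. `P′` has 8 linear extensions, split 4 : 4 by the incomparable pair `2, 3`
(swapped by an automorphism); `P` has 15, an odd number, and no pair does better than 7 : 8.
-/

lemma List.Nodup.length_eq_card {α : Type*} [Fintype α] [DecidableEq α] {l : List α}
    (hnd : l.Nodup) (hl : ∀ x, x ∈ l) : l.length = Fintype.card α :=
  (Fintype.card_fin _).symm.trans (Fintype.card_congr (hnd.getEquivOfForallMemList l hl))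

section LinearListings

variable {R : Type*} [PartialOrder R] [Fintype R]

def LinExt.toList (f : LinExt R) : List R := List.ofFn f.1.symm

lemma LinExt.nodup_toList (f : LinExt R) : f.toList.Nodup :=
  List.nodup_ofFn.2 f.1.symm.injective

lemma LinExt.mem_toList (f : LinExt R) (x : R) : x ∈ f.toList := by
  simpa [LinExt.toList] using ⟨f.1 x, f.1.symm_apply_apply x⟩

variable [DecidableEq R]

lemma LinExt.idxOf_toList (f : LinExt R) (x : R) : f.toList.idxOf x = f.1 x := by
  simpa [LinExt.toList] using f.nodup_toList.idxOf_getElem (f.1 x) (by simp [LinExt.toList])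

lemma LinExt.toList_injective : Function.Injective (LinExt.toList (R := R)) := fun f g h =>
  Subtype.ext <| Equiv.ext fun x => Fin.ext <| by rw [← f.idxOf_toList, ← g.idxOf_toList, h]

def LinExt.ofList (l : List R) (hnd : l.Nodup) (hl : ∀ x, x ∈ l)
    (hlin : ∀ x y : R, x < y → l.idxOf x < l.idxOf y) : LinExt R :=
  ⟨(hnd.getEquivOfForallMemList l hl).symm.trans (finCongr (hnd.length_eq_card hl)),
    fun x y hxy => by simpa [Fin.lt_def, List.Nodup.getEquivOfForallMemList] using hlin x y hxy⟩

lemma LinExt.toList_ofList (l : List R) (hnd : l.Nodup) (hl : ∀ x, x ∈ l)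
    (hlin : ∀ x y : R, x < y → l.idxOf x < l.idxOf y) :
    (LinExt.ofList l hnd hl hlin).toList = l := by
  apply List.ext_getElem
  · simp [LinExt.toList, hnd.length_eq_card hl]
  · intro i _ _
    simp [LinExt.toList, LinExt.ofList, List.Nodup.getEquivOfForallMemList]

variable [DecidableLT R]

def linearListings (base : List R) : List (List R) :=
  base.permutations'.filter fun l => decide (∀ x y : R, x < y → l.idxOf x < l.idxOf y)

variable {base : List R}

lemma mem_linearListings (hnd : base.Nodup) (hbase : ∀ x, x ∈ base) {l : List R} :
    l ∈ linearListings base ↔ ∃ f : LinExt R, f.toList = l := by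
  simp only [linearListings, List.mem_filter, List.mem_permutations', decide_eq_true_eq]
  constructor
  · rintro ⟨hperm, hlin⟩
    exact ⟨.ofList l (hperm.nodup_iff.2 hnd) (fun x => hperm.mem_iff.2 (hbase x)) hlin,
      LinExt.toList_ofList ..⟩
  · rintro ⟨f, rfl⟩
    refine ⟨List.perm_of_nodup_nodup_toFinset_eq f.nodup_toList hnd ?_, fun x y hxy => ?_⟩
    · ext x
      simp [f.mem_toList, hbase]
    · simpa [LinExt.idxOf_toList] using f.2 x y hxy

lemma natCard_linExt_filter (hnd : base.Nodup) (hbase : ∀ x, x ∈ base) (p : List R → Bool) :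
    Nat.card {f : LinExt R // p f.toList} = ((linearListings base).filter p).length := by
  have hnodup : ((linearListings base).filter p).Nodup :=
    (((List.permutations_perm_permutations' base).nodup_iff.1
      (List.nodup_permutations base hnd)).filter _).filter _
  let e : {f : LinExt R // p f.toList} ≃ {l // l ∈ (linearListings base).filter p} :=
    Equiv.ofBijective (fun f => ⟨f.1.toList, List.mem_filter.2
      ⟨(mem_linearListings hnd hbase).2 ⟨f.1, rfl⟩, f.2⟩⟩) <| by
      refine ⟨fun f g h => Subtype.ext (LinExt.toList_injective (congrArg Subtype.val h)), ?_⟩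
      rintro ⟨l, hl⟩
      obtain ⟨hl, hp⟩ := List.mem_filter.1 hl
      obtain ⟨f, rfl⟩ := (mem_linearListings hnd hbase).1 hl
      exact ⟨⟨f, hp⟩, rfl⟩
  rw [Nat.card_congr (e.trans (hnodup.getEquiv _).symm), Nat.card_eq_fintype_card,
    Fintype.card_fin]

lemma numExt_eq_length (hnd : base.Nodup) (hbase : ∀ x, x ∈ base) :
    numExt R = (linearListings base).length := by
  simpa [numExt] using natCard_linExt_filter hnd hbase (fun _ => true)

lemma numBelow_eq_length_filter (hnd : base.Nodup) (hbase : ∀ x, x ∈ base) (x y : R) :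
    numBelow R x y = ((linearListings base).filter fun l => l.idxOf x < l.idxOf y).length := by
  rw [← natCard_linExt_filter hnd hbase, numBelow]
  simp only [LinExt.idxOf_toList, Fin.val_fin_lt, decide_eq_true_eq]

end LinearListings

noncomputable def deltaNum (R : Type*) [PartialOrder R] [Fintype R] [DecidableEq R] : ℕ :=
  Finset.univ.fold max 0 fun xy : R × R =>
    if xy.1 = xy.2 then 0 else min (numBelow R xy.1 xy.2) (numBelow R xy.2 xy.1)

lemma delta_eq_deltaNum_div (R : Type*) [PartialOrder R] [Fintype R] [DecidableEq R] :
    delta R = deltaNum R / numExt R := by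
  rw [delta, deltaNum, ← Finset.fold_hom (op' := max) (m := fun n : ℕ => (n : ℚ) / numExt R)
    fun a b => by rw [Nat.cast_max, max_div_div_right (Nat.cast_nonneg _)]]
  simp only [Nat.cast_zero, zero_div]
  refine Finset.fold_congr fun xy _ => ?_
  split_ifs
  · simp
  · simp only [probBelow, Nat.cast_min, min_div_div_right (Nat.cast_nonneg _)]

instance : DecidableLE P5 := fun a b => inferInstanceAs (Decidable (p5LE a b))
instance : DecidableLT P5 := decidableLTOfDecidableLE
instance : DecidableLE P6 := fun a b => inferInstanceAs (Decidable (p6LE a b))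
instance : DecidableLT P6 := decidableLTOfDecidableLE

lemma delta_P5 : delta P5 = 1 / 2 := by
  have hext : numExt P5 = 8 := by
    rw [numExt_eq_length (R := P5) (List.nodup_finRange 5) List.mem_finRange]
    decide
  have hnum : deltaNum P5 = 4 := by
    simp only [deltaNum,
      numBelow_eq_length_filter (R := P5) (List.nodup_finRange 5) List.mem_finRange]
    decide
  rw [delta_eq_deltaNum_div, hnum, hext]
  norm_num

set_option maxRecDepth 40000 in
lemma delta_P6 : delta P6 = 7 / 15 := by
  have hext : numExt P6 = 15 := by
    rw [numExt_eq_length (R := P6) (List.nodup_finRange 6) List.mem_finRange]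
    decide
  have hnum : deltaNum P6 = 7 := by
    simp only [deltaNum,
      numBelow_eq_length_filter (R := P6) (List.nodup_finRange 6) List.mem_finRange]
    decide
  rw [delta_eq_deltaNum_div, hnum, hext]
  norm_num

instance LexAt.decidableLE (P : Type*) [PartialOrder P] [DecidableLE P] [DecidableLT P] (i : P)
    (Q : Type*) [PartialOrder Q] [DecidableLE Q] : DecidableLE (LexAt P i Q)
  | .inl a, .inl b => inferInstanceAs (Decidable (a.1 ≤ b.1))
  | .inl a, .inr _ => inferInstanceAs (Decidable (a.1 < i))
  | .inr _, .inl b => inferInstanceAs (Decidable (i < b.1))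
  | .inr q, .inr q' => inferInstanceAs (Decidable (q ≤ q'))

-- `(2 : Fin 5)` does not have type `P5` up to reducible unfolding, so instance search cannot
-- apply the generic `LexAt` instances here.
instance : PartialOrder (LexAt P5 ((2 : Fin 5) : P5) (Fin 2)) := LexAt.instPartialOrder _ _ _
instance : Fintype (LexAt P5 ((2 : Fin 5) : P5) (Fin 2)) := LexAt.instFintype _ _ _
instance : DecidableLE (LexAt P5 ((2 : Fin 5) : P5) (Fin 2)) := LexAt.decidableLE _ _ _

def lexAtToP6 : LexAt P5 ((2 : Fin 5) : P5) (Fin 2) → P6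
  | .inl p => (![0, 1, 2, 4, 5] : Fin 5 → Fin 6) p.1
  | .inr q => (![2, 3] : Fin 2 → Fin 6) q

lemma lexAtToP6_le_iff : ∀ a b, lexAtToP6 a ≤ lexAtToP6 b ↔ a ≤ b := by decide

noncomputable def p6OrderIsoLexAt : P6 ≃o LexAt P5 ((2 : Fin 5) : P5) (Fin 2) :=
  OrderIso.symm
    { toEquiv := Equiv.ofBijective lexAtToP6 (by decide)
      map_rel_iff' := lexAtToP6_le_iff _ _ }

/-- `P6` is (isomorphic to) the lexicographic sum `P5 ∘_2 ⟨2⟩`, with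
`δ(P6) = 7/15 < 1/2 = δ(P5)`; so `δ(P(Q₁,…,Qₙ)) ≥ δ(P)` fails in general. -/
theorem delta_counterexample :
    Nonempty (@OrderIso P6 (LexAt P5 ((2 : Fin 5) : P5) (Fin 2)) _
      (LexAt.instPartialOrder P5 ((2 : Fin 5) : P5) (Fin 2)).toLE) ∧
    delta P6 = 7/15 ∧
    delta P5 = 1/2 ∧
    delta P6 < delta P5 :=
  ⟨⟨p6OrderIsoLexAt⟩, delta_P6, delta_P5, by rw [delta_P6, delta_P5]; norm_num⟩
end
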